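/- Let S ⊂ ℝ^d be a finite set and suppose the polyhedron P(S) = {w ∈ ℝ^d : ⟨δ, w⟩ ≥ 2 for all δ ∈ S} is nonempty; let w*(S) denote the unique minimum-Euclidean-norm element of P(S). Then there exists a subset S' ⊆ S with |S'| ≤ d + 1 such that w*(S') = w*(S); that is, the maximum-margin solution is determined by at most d + 1 of the constraints. -/

import Mathlib

/-!
Hard-margin duality: if `p` is the point of least norm in the convex hull of `S`, then
`(2 / ‖p‖²) • p` is the least-norm point of `P(S)`. Indeed, the projection inequality
`‖p‖² ≤ ⟪p, δ⟫` puts it in `P(S)`, and every `u ∈ P(S)` satisfies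
`2 ≤ ⟪p, u⟫ ≤ ‖p‖ ‖u‖`. By Carathéodory, `p` lies in the convex hull of an affinely
independent `S' ⊆ S`, at most `d + 1` points, so it is also the least-norm point of that
smaller hull, and the same formula gives `w*(S') = w*(S)`.
-/

open RealInnerProductSpace

/-- The polyhedron `P(S) = {w : ⟨δ, w⟩ ≥ 2 for all δ ∈ S}`. -/
def constraintPolyhedron {d : ℕ} (S : Finset (EuclideanSpace ℝ (Fin d))) :
    Set (EuclideanSpace ℝ (Fin d)) :=
  {w | ∀ δ ∈ S, 2 ≤ ⟪δ, w⟫}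

theorem Convex.eq_of_isMinOn_norm {F : Type*} [NormedAddCommGroup F] [NormedSpace ℝ F]
    [StrictConvexSpace ℝ F] {K : Set F} (hK : Convex ℝ K) {v w : F} (hv : v ∈ K)
    (hw : w ∈ K) (hvmin : IsMinOn (‖·‖) K v) (hwmin : IsMinOn (‖·‖) K w) : v = w := by
  by_contra hne
  have hmid : (1 / 2 : ℝ) • v + (1 / 2 : ℝ) • w ∈ K :=
    hK hv hw (by norm_num) (by norm_num) (by norm_num)
  have hlt : ‖(1 / 2 : ℝ) • v + (1 / 2 : ℝ) • w‖ < ‖v‖ :=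
    norm_combo_lt_of_ne le_rfl (hwmin hv) hne (by norm_num) (by norm_num) (by norm_num)
  exact (hvmin hmid).not_gt hlt

section InnerProductSpace

variable {E : Type*} [NormedAddCommGroup E] [InnerProductSpace ℝ E]

theorem le_inner_of_mem_convexHull {s : Set E} {u x : E} {c : ℝ}
    (hs : ∀ δ ∈ s, c ≤ ⟪δ, u⟫) (hx : x ∈ convexHull ℝ s) : c ≤ ⟪x, u⟫ :=
  convexHull_min hs (convex_halfSpace_ge
    (IsLinearMap.mk (fun x y => inner_add_left x y u) fun r x => real_inner_smul_left x u r) c) hx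

theorem sq_norm_le_inner_of_isMinOn_norm {K : Set E} (hK : Convex ℝ K) {p x : E}
    (hp : p ∈ K) (hmin : IsMinOn (‖·‖) K p) (hx : x ∈ K) : ‖p‖ ^ 2 ≤ ⟪p, x⟫ := by
  have : Nonempty K := ⟨⟨p, hp⟩⟩
  have hbdd : BddBelow (Set.range fun w : K => ‖0 - (w : E)‖) :=
    ⟨0, by rintro _ ⟨w, rfl⟩; exact norm_nonneg _⟩
  have hinf : ‖0 - p‖ = ⨅ w : K, ‖0 - (w : E)‖ :=
    le_antisymm (le_ciInf fun w => by simpa using hmin w.2) (ciInf_le hbdd ⟨p, hp⟩)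
  have := (norm_eq_iInf_iff_real_inner_le_zero hK hp).1 hinf x hx
  rw [zero_sub, inner_neg_left, inner_sub_right, real_inner_self_eq_norm_sq] at this
  linarith

end InnerProductSpace

theorem AffineIndependent.finset_card_le_finrank_succ {k V : Type*} [DivisionRing k]
    [AddCommGroup V] [Module k V] [FiniteDimensional k V] {s : Finset V}
    (hs : AffineIndependent k ((↑) : s → V)) : s.card ≤ Module.finrank k V + 1 := by
  simpa using hs.card_le_finrank_succ.trans (Nat.add_le_add_right (Submodule.finrank_le _) 1)

section constraintPolyhedron

variable {d : ℕ}

theorem convex_constraintPolyhedron (S : Finset (EuclideanSpace ℝ (Fin d))) :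
    Convex ℝ (constraintPolyhedron S) := by
  simp only [constraintPolyhedron, Set.ofPred_forall]
  exact convex_iInter₂ fun δ _ => convex_halfSpace_ge (innerₛₗ ℝ δ).isLinear 2

theorem isMinOn_norm_constraintPolyhedron_of_isMinOn_convexHull
    {S : Finset (EuclideanSpace ℝ (Fin d))} {p : EuclideanSpace ℝ (Fin d)} (hp : p ∈ convexHull ℝ (S : Set _))
    (hmin : IsMinOn (‖·‖) (convexHull ℝ (S : Set _)) p) (hp0 : p ≠ 0) :
    (2 / ‖p‖ ^ 2) • p ∈ constraintPolyhedron S ∧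
      IsMinOn (‖·‖) (constraintPolyhedron S) ((2 / ‖p‖ ^ 2) • p) := by
  have hpos : 0 < ‖p‖ := norm_pos_iff.2 hp0
  constructor
  · intro δ hδ
    have hproj := sq_norm_le_inner_of_isMinOn_norm (convex_convexHull ℝ _) hp hmin
      (subset_convexHull ℝ _ hδ)
    rw [real_inner_smul_right, real_inner_comm, div_mul_eq_mul_div, le_div_iff₀ (by positivity)]
    linarith
  · intro u hu
    have h2 : 2 ≤ ⟪p, u⟫ := le_inner_of_mem_convexHull hu hp
    have hcs := real_inner_le_norm p u
    show ‖(2 / ‖p‖ ^ 2) • p‖ ≤ ‖u‖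
    rw [norm_smul, Real.norm_of_nonneg (by positivity), sq, div_mul_eq_mul_div,
      mul_div_mul_right _ _ hpos.ne', div_le_iff₀ hpos]
    linarith

end constraintPolyhedron

/-- The maximum-margin solution is determined by at most `d + 1` constraints: if the polyhedron
`P(S) = {w : ⟨δ, w⟩ ≥ 2, δ ∈ S}` is nonempty, there is `S' ⊆ S` with `|S'| ≤ d + 1` such that
the minimum-norm element of `P(S')` equals the minimum-norm element of `P(S)`. -/
theorem minNorm_determined_by_few_constraints
    (d : ℕ) (S : Finset (EuclideanSpace ℝ (Fin d)))
    (hne : (constraintPolyhedron S).Nonempty) :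
    ∃ S' ⊆ S, S'.card ≤ d + 1 ∧
      ∀ w' w : EuclideanSpace ℝ (Fin d),
        (w' ∈ constraintPolyhedron S' ∧ ∀ u ∈ constraintPolyhedron S', ‖w'‖ ≤ ‖u‖) →
        (w ∈ constraintPolyhedron S ∧ ∀ u ∈ constraintPolyhedron S, ‖w‖ ≤ ‖u‖) →
        w' = w := by
  rcases S.eq_empty_or_nonempty with rfl | hS
  · exact ⟨∅, subset_rfl, by simp, fun w' w hw' hw =>
      (convex_constraintPolyhedron ∅).eq_of_isMinOn_norm hw'.1 hw.1 hw'.2 hw.2⟩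
  obtain ⟨p, hp, hmin⟩ := (S.finite_toSet.isCompact_convexHull ℝ).exists_isMinOn
    hS.to_set.convexHull continuous_norm.continuousOn
  have hp0 : p ≠ 0 := by
    obtain ⟨u, hu⟩ := hne
    rintro rfl
    have h := le_inner_of_mem_convexHull hu hp
    rw [inner_zero_left] at h
    norm_num at h
  obtain ⟨B, hB, hBS, hpB⟩ : ∃ B : Finset (EuclideanSpace ℝ (Fin d)),
      AffineIndependent ℝ ((↑) : B → EuclideanSpace ℝ (Fin d)) ∧ B ⊆ S ∧
        p ∈ convexHull ℝ (B : Set _) := by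
    simpa using convexHull_eq_union.subset hp
  obtain ⟨hwS, hminS⟩ := isMinOn_norm_constraintPolyhedron_of_isMinOn_convexHull hp hmin hp0
  obtain ⟨hwB, hminB⟩ := isMinOn_norm_constraintPolyhedron_of_isMinOn_convexHull hpB
    (hmin.on_subset (convexHull_mono (Finset.coe_subset.2 hBS))) hp0
  refine ⟨B, hBS, by simpa using hB.finset_card_le_finrank_succ, fun w' w hw' hw => ?_⟩
  rw [(convex_constraintPolyhedron B).eq_of_isMinOn_norm hw'.1 hwB hw'.2 hminB,
    (convex_constraintPolyhedron S).eq_of_isMinOn_norm hw.1 hwS hw.2 hminS]
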